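/- Let C be a left H-module factor coalgebra of a Hopf algebra H over a field k, with canonical surjection π : H → C. Let V be a right C-comodule and U a right H-comodule (viewed as a C-comodule via π). If there exists a nonzero C-colinear map U → V, then V □_C H ≠ 0. -/
import Mathlib

open TensorProduct LinearMap Coalgebra HopfAlgebra

variable (k : Type*) [Field k]

/-- `ρ` is a right `C`-comodule structure on `V`. -/
def IsRightComodule (C V : Type*) [AddCommGroup C] [Module k C] [Coalgebra k C]
    [AddCommGroup V] [Module k V] (ρ : V →ₗ[k] V ⊗[k] C) : Prop :=
  (∀ v : V, (TensorProduct.rid k V)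
      (LinearMap.lTensor V (Coalgebra.counit (R := k) (A := C)) (ρ v)) = v) ∧
    ∀ v : V, LinearMap.lTensor V (Coalgebra.comul (R := k) (A := C)) (ρ v) =
      (TensorProduct.assoc k V C C) (LinearMap.rTensor C ρ (ρ v))

/-- The cotensor product `V □_C W`: the equalizer of `ρ ⊗ id` and `id ⊗ λ`. -/
noncomputable def cotensor (C V W : Type*) [AddCommGroup C] [Module k C]
    [AddCommGroup V] [Module k V] [AddCommGroup W] [Module k W]
    (ρ : V →ₗ[k] V ⊗[k] C) (lam : W →ₗ[k] C ⊗[k] W) : Submodule k (V ⊗[k] W) :=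
  LinearMap.ker (LinearMap.rTensor W ρ -
    (TensorProduct.assoc k V C W).symm.toLinearMap ∘ₗ LinearMap.lTensor V lam)

private lemma aux_assoc (U V H C : Type*) [AddCommGroup U] [Module k U]
    [AddCommGroup V] [Module k V]
    [AddCommGroup H] [Module k H] [AddCommGroup C] [Module k C]
    (f : U →ₗ[k] V) (p : H →ₗ[k] C) :
    (LinearMap.rTensor H (LinearMap.rTensor C f ∘ₗ LinearMap.lTensor U p)) ∘ₗ
      (TensorProduct.assoc k U H H).symm.toLinearMap
    = (TensorProduct.assoc k V C H).symm.toLinearMap ∘ₗ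
      LinearMap.rTensor (C ⊗[k] H) f ∘ₗ LinearMap.lTensor U (LinearMap.rTensor H p) := by
  ext u g h
  simp

/-- Let `C` be a left `H`-module factor coalgebra of a Hopf algebra `H`
over a field `k`, with canonical surjection `π : H → C`. Let `V` be a right `C`-comodule
and `U` a right `H`-comodule, viewed as a `C`-comodule via `π`. If there is a nonzero
`C`-colinear map `U → V`, then `V □_C H ≠ 0`. -/
theorem cotensor_ne_bot_of_colinear_from_H_comodule
    (H C U V : Type*) [Ring H] [HopfAlgebra k H]
    [AddCommGroup C] [Module k C] [Coalgebra k C]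
    [Module H C] [IsScalarTower k H C] [SMulCommClass k H C]
    [AddCommGroup U] [Module k U] [AddCommGroup V] [Module k V]
    (π : H →ₗc[k] C) (hπsurj : Function.Surjective π)
    (hπlin : ∀ g h : H, π (g * h) = g • π h)
    (ρU : U →ₗ[k] U ⊗[k] H) (hU : IsRightComodule k H U ρU)
    (ρV : V →ₗ[k] V ⊗[k] C) (hV : IsRightComodule k C V ρV)
    (f : U →ₗ[k] V) (hf : f ≠ 0)
    (hcolin : ∀ u : U,
      ρV (f u) = LinearMap.rTensor C f ((LinearMap.lTensor U π.toLinearMap) (ρU u))) :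
    cotensor k C V H ρV (LinearMap.rTensor H π.toLinearMap ∘ₗ Coalgebra.comul) ≠ ⊥ := by
  obtain ⟨u, hu⟩ : ∃ u, f u ≠ 0 := by
    by_contra h
    push_neg at h
    exact hf (LinearMap.ext h)
  intro hbot
  set x : V ⊗[k] H := LinearMap.rTensor H f (ρU u) with hxdef
  -- x is in the cotensor product
  have hmem : x ∈ cotensor k C V H ρV (LinearMap.rTensor H π.toLinearMap ∘ₗ Coalgebra.comul) := by
    rw [cotensor, LinearMap.mem_ker, LinearMap.sub_apply, sub_eq_zero]
    have h1 : LinearMap.rTensor H ρV x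
        = LinearMap.rTensor H (LinearMap.rTensor C f ∘ₗ LinearMap.lTensor U π.toLinearMap)
            (LinearMap.rTensor H ρU (ρU u)) := by
      rw [hxdef, ← LinearMap.comp_apply, ← LinearMap.rTensor_comp]
      have hfeq : ρV ∘ₗ f
          = (LinearMap.rTensor C f ∘ₗ LinearMap.lTensor U π.toLinearMap) ∘ₗ ρU :=
        LinearMap.ext hcolin
      rw [hfeq, LinearMap.rTensor_comp, LinearMap.comp_apply]
    have h2 : LinearMap.rTensor H ρU (ρU u)
        = (TensorProduct.assoc k U H H).symm
            (LinearMap.lTensor U (Coalgebra.comul (R := k) (A := H)) (ρU u)) := by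
      rw [hU.2 u, LinearEquiv.symm_apply_apply]
    have h3 : LinearMap.lTensor V (LinearMap.rTensor H π.toLinearMap ∘ₗ Coalgebra.comul) x
        = LinearMap.rTensor (C ⊗[k] H) f (LinearMap.lTensor U (LinearMap.rTensor H π.toLinearMap)
            (LinearMap.lTensor U (Coalgebra.comul (R := k) (A := H)) (ρU u))) := by
      rw [hxdef, ← LinearMap.comp_apply, LinearMap.lTensor_comp_rTensor,
        ← LinearMap.rTensor_comp_lTensor, LinearMap.comp_apply, LinearMap.lTensor_comp,
        LinearMap.comp_apply]
    have h4 := congrFun (congrArg (fun g => g.toFun)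
      (aux_assoc k U V H C f π.toLinearMap))
      (LinearMap.lTensor U (Coalgebra.comul (R := k) (A := H)) (ρU u))
    simp only [LinearMap.coe_comp, Function.comp_apply, LinearEquiv.coe_coe,
      LinearMap.coe_mk, AddHom.coe_mk] at h4 ⊢
    rw [h1, h2, h3]
    exact h4
  rw [hbot, Submodule.mem_bot] at hmem
  -- but applying (id ⊗ ε) to x gives f u ≠ 0
  have hcount : (TensorProduct.rid k V)
      (LinearMap.lTensor V (Coalgebra.counit (R := k) (A := H)) x) = f u := by
    rw [hxdef, ← LinearMap.comp_apply, LinearMap.lTensor_comp_rTensor,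
      ← LinearMap.rTensor_comp_lTensor, LinearMap.comp_apply]
    have : ∀ w : U ⊗[k] k, (TensorProduct.rid k V) (LinearMap.rTensor k f w)
        = f ((TensorProduct.rid k U) w) := by
      intro w
      induction w using TensorProduct.induction_on with
      | zero => simp
      | tmul a b => simp [TensorProduct.smul_tmul']
      | add a b ha hb => simp [ha, hb]
    rw [this, hU.1 u]
  rw [hmem] at hcount
  simp only [map_zero] at hcount
  exact hu hcount.symm
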